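/- arXiv:2208.04590 — 5 statements merged into one kernel-verified Lean document; each statement's English description precedes it below -/
import Mathlib

section
/- Let A ⊆ ℝ^n be a finite set and S a proper nonempty subset of A. Then codim S ≤ codim A, and equality holds if and only if A is a pyramid over S, i.e., S is contained in an affine subspace of dimension dim(A) − |A| + |S|. -/
open BigOperators

private lemma key_rank_le (n : ℕ) (A S : Finset (Fin n → ℝ)) (hSA : S ⊆ A) (hne : S.Nonempty) :
    Module.finrank ℝ (vectorSpan ℝ (A : Set (Fin n → ℝ)))
      ≤ Module.finrank ℝ (vectorSpan ℝ (S : Set (Fin n → ℝ))) + (A \ S).card := by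
  classical
  obtain ⟨p, hp⟩ := hne
  have hpA : p ∈ A := hSA hp
  have hA : (A : Set (Fin n → ℝ)) = (S : Set _) ∪ ((A \ S : Finset _) : Set _) := by
    rw [← Finset.coe_union, Finset.union_sdiff_of_subset hSA]
  have h1 : vectorSpan ℝ (A : Set (Fin n → ℝ))
      = vectorSpan ℝ (S : Set (Fin n → ℝ))
        ⊔ Submodule.span ℝ ((· -ᵥ p) '' ((A \ S : Finset _) : Set _)) := by
    rw [vectorSpan_eq_span_vsub_set_right ℝ (Finset.mem_coe.mpr hpA),
      vectorSpan_eq_span_vsub_set_right ℝ (Finset.mem_coe.mpr hp),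
      hA, Set.image_union, Submodule.span_union]
  rw [h1]
  have h2 := Submodule.finrank_sup_add_finrank_inf_eq
    (vectorSpan ℝ (S : Set (Fin n → ℝ)))
    (Submodule.span ℝ ((· -ᵥ p) '' ((A \ S : Finset _) : Set _)))
  have h3 : Module.finrank ℝ (Submodule.span ℝ ((· -ᵥ p) '' ((A \ S : Finset _) : Set _)))
      ≤ (A \ S).card := by
    have himg : ((· -ᵥ p) '' ((A \ S : Finset _) : Set _))
        = (((A \ S).image (· -ᵥ p) : Finset _) : Set _) := by
      simp [Finset.coe_image]
    rw [himg]
    exact (finrank_span_finset_le_card _).trans (Finset.card_image_le)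
  omega

/-- For a nonempty proper subset `S` of a finite set `A ⊆ ℝⁿ`, `codim S ≤ codim A`, with
equality iff `A` is a pyramid over `S`, i.e. `S` lies in an affine subspace of dimension
`dim A − |A| + |S|`. -/
theorem codim_subset_le_and_eq_iff_pyramid (n : ℕ) (A S : Finset (Fin n → ℝ))
    (hSA : S ⊆ A) (hne : S.Nonempty) (hproper : S ≠ A) :
    ((S.card : ℤ) - (Module.finrank ℝ (affineSpan ℝ (S : Set (Fin n → ℝ))).direction : ℤ) - 1
      ≤ (A.card : ℤ) - (Module.finrank ℝ (affineSpan ℝ (A : Set (Fin n → ℝ))).direction : ℤ) - 1)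
    ∧
    (((S.card : ℤ) - (Module.finrank ℝ (affineSpan ℝ (S : Set (Fin n → ℝ))).direction : ℤ) - 1
        = (A.card : ℤ) - (Module.finrank ℝ (affineSpan ℝ (A : Set (Fin n → ℝ))).direction : ℤ) - 1)
      ↔
      ∃ E : AffineSubspace ℝ (Fin n → ℝ), (S : Set (Fin n → ℝ)) ⊆ (E : Set (Fin n → ℝ)) ∧
        (Module.finrank ℝ E.direction : ℤ)
          = (Module.finrank ℝ (affineSpan ℝ (A : Set (Fin n → ℝ))).direction : ℤ)
            - A.card + S.card) := by
  classical
  have hcards : (A \ S).card = A.card - S.card := Finset.card_sdiff_of_subset hSA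
  have hcardle : S.card ≤ A.card := Finset.card_le_card hSA
  have hkey := key_rank_le n A S hSA hne
  rw [direction_affineSpan, direction_affineSpan]
  constructor
  · omega
  · constructor
    · intro heq
      refine ⟨affineSpan ℝ (S : Set (Fin n → ℝ)), subset_affineSpan ℝ _, ?_⟩
      rw [direction_affineSpan]
      omega
    · rintro ⟨E, hSE, hE⟩
      have hle : affineSpan ℝ (S : Set (Fin n → ℝ)) ≤ E := affineSpan_le.mpr hSE
      have hd : (affineSpan ℝ (S : Set (Fin n → ℝ))).direction ≤ E.direction :=
        AffineSubspace.direction_le hle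
      have hr : Module.finrank ℝ (affineSpan ℝ (S : Set (Fin n → ℝ))).direction
          ≤ Module.finrank ℝ E.direction := Submodule.finrank_mono hd
      rw [direction_affineSpan] at hr
      omega
end

section
/- Let A ⊆ ℝ^n be a finite non-pyramidal set of codimension 2 and dimension d. Define an equivalence relation on A by a ∼ b iff the Gale dual rows B_a and B_b are collinear (where B is a Gale dual matrix of the exponent matrix of A; all rows are nonzero since A is not a pyramid). Then the number N of circuits C ⊆ A with dim C < dim A equals the number of equivalence classes of A/∼ having at least two elements, and consequently N + |A/∼| ≤ d + 3. -/
open Matrix BigOperators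

/-- Exponent matrix: columns `(1, a_j)`. -/
noncomputable def expMat (n s : ℕ) (a : Fin s → Fin n → ℝ) :
    Matrix (Fin (n + 1)) (Fin s) ℝ :=
  Matrix.of fun i j => Fin.cases (motive := fun _ => ℝ) 1 (fun r => a j r) i

/-!
The affine dependencies of `a` form the kernel of `expMat`, which the Gale dual identifies with
`{B x | x ∈ ℝ²}`; by rank–nullity the dependencies supported on `T` form a space of dimension
`|T| - 1 - dim T`. A nonzero dependency `B x` vanishes at `j` exactly when `B_j ⊥ x`. As no row of
`B` is zero (`A` is not a pyramid), once it vanishes at some `i` its zero set is the collinearity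
class of `i`. Hence the circuits `T ≠ A` are exactly the complements `A ∖ C` of the classes `C`,
with `dim (A ∖ C) = d + 1 - |C|`, so `dim T < d` iff `|C| ≥ 2`. The bound follows from
`∑ |C| = d + 3`, every class contributing at least `1 + [|C| ≥ 2]`.
-/

open Module Submodule

section Supported

variable {R ι : Type*} [Semiring R]

def supportedOn (T : Finset ι) : Submodule R (ι → R) :=
  Submodule.pi (↑T)ᶜ fun _ => ⊥

theorem mem_supportedOn {T : Finset ι} {v : ι → R} :
    v ∈ supportedOn T ↔ ∀ j ∉ T, v j = 0 := by
  simp [supportedOn, Submodule.mem_pi]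

@[simp]
theorem supportedOn_univ [Fintype ι] : supportedOn (R := R) (Finset.univ : Finset ι) = ⊤ :=
  eq_top_iff.2 fun _ _ => mem_supportedOn.2 fun j hj => absurd (Finset.mem_univ j) hj

@[simp]
theorem supportedOn_empty : supportedOn (R := R) (∅ : Finset ι) = ⊥ :=
  eq_bot_iff.2 fun _ hv =>
    (Submodule.mem_bot R).2 (funext fun j => mem_supportedOn.1 hv j (Finset.notMem_empty j))

theorem finrank_inf_supportedOn_lt {K : Submodule ℝ (ι → ℝ)} [FiniteDimensional ℝ K]
    {T : Finset ι} {i : ι} (hi : i ∉ T) {v : ι → ℝ} (hv : v ∈ K) (hvi : v i ≠ 0) :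
    finrank ℝ ↥(K ⊓ supportedOn T) < finrank ℝ K := by
  refine Submodule.finrank_lt_finrank_of_lt (inf_le_left.lt_of_ne fun h => hvi ?_)
  exact mem_supportedOn.1 (mem_inf.1 (h.symm ▸ hv : v ∈ K ⊓ supportedOn T)).2 i hi

variable [DecidableEq ι]

def extendByZero (T : Finset ι) : (T → R) →ₗ[R] (ι → R) where
  toFun w j := if h : j ∈ T then w ⟨j, h⟩ else 0
  map_add' u v := by ext j; by_cases h : j ∈ T <;> simp [h]
  map_smul' c v := by ext j; by_cases h : j ∈ T <;> simp [h]

@[simp]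
theorem extendByZero_apply_coe (T : Finset ι) (w : T → R) (x : T) :
    extendByZero T w x = w x := by
  simp [extendByZero]

theorem extendByZero_injective (T : Finset ι) : Function.Injective (extendByZero (R := R) T) :=
  fun _ _ h => funext fun x => by simpa using congrFun h x

theorem range_extendByZero (T : Finset ι) :
    LinearMap.range (extendByZero (R := R) T) = supportedOn T := by
  ext v
  refine ⟨?_, fun hv => ⟨fun x => v x, funext fun j => ?_⟩⟩
  · rintro ⟨w, rfl⟩
    exact mem_supportedOn.2 fun j hj => by simp [extendByZero, hj]
  · by_cases hj : j ∈ T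
    · simp [extendByZero, hj]
    · simp [extendByZero, hj, mem_supportedOn.1 hv j hj]

theorem extendByZero_single (T : Finset ι) (x : T) (r : R) :
    extendByZero T (Pi.single x r) = Pi.single (x : ι) r := by
  ext j
  by_cases hj : j ∈ T
  · simp [extendByZero, hj, Pi.single_apply, Subtype.ext_iff]
  · have hjx : j ≠ x := fun h => hj (h ▸ x.2)
    simp [extendByZero, hj, hjx]

end Supported

theorem Matrix.mulVec_injective_of_rank_eq {K m k : Type*} [Field K] [Fintype m] [Fintype k]
    {A : Matrix m k K} (h : A.rank = Fintype.card k) : Function.Injective A.mulVec :=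
  mulVec_injective_iff.2 (linearIndependent_iff_card_eq_finrank_span.2
    (by rw [Set.finrank, ← rank_eq_finrank_span_cols, h]))

section AffineDependencies

variable {n m : ℕ}

theorem finrank_span_range_cons_one {ι : Type*} [Nonempty ι] (b : ι → Fin n → ℝ) :
    finrank ℝ (span ℝ (Set.range fun x => (Fin.cons 1 (b x) : Fin (n + 1) → ℝ))) =
      finrank ℝ (vectorSpan ℝ (Set.range b)) + 1 := by
  obtain ⟨i₀⟩ := ‹Nonempty ι›
  set V := span ℝ (Set.range fun x => (Fin.cons 1 (b x) : Fin (n + 1) → ℝ))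
  -- `L` maps the lift of `b x` to `b x - b i₀`; its kernel is the line through the lift of `b i₀`
  let L : (Fin (n + 1) → ℝ) →ₗ[ℝ] (Fin n → ℝ) :=
    LinearMap.funLeft ℝ ℝ Fin.succ - (LinearMap.proj 0).smulRight (b i₀)
  have hL (v : Fin (n + 1) → ℝ) : L v = Fin.tail v - v 0 • b i₀ := rfl
  have hker : LinearMap.ker L = span ℝ {Fin.cons 1 (b i₀)} := by
    ext v
    rw [LinearMap.mem_ker, hL, sub_eq_zero, mem_span_singleton]
    constructor
    · intro h
      refine ⟨v 0, ?_⟩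
      rw [← Fin.cons_self_tail v, h]
      ext i
      refine Fin.cases ?_ (fun _ => ?_) i <;> simp
    · rintro ⟨t, rfl⟩
      ext
      simp [Fin.tail]
  have hrange : LinearMap.range (L.domRestrict V) = vectorSpan ℝ (Set.range b) := by
    rw [LinearMap.range_domRestrict, Submodule.map_span, ← Set.range_comp,
      vectorSpan_range_eq_span_range_vsub_right ℝ b i₀]
    congr 2
    ext x : 1
    simp [hL]
  have hkerV : LinearMap.ker L ≤ V := by
    rw [hker, span_le, Set.singleton_subset_iff]
    exact subset_span ⟨i₀, rfl⟩
  have hkerL : finrank ℝ (LinearMap.ker (L.domRestrict V)) = 1 := by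
    rw [LinearMap.ker_domRestrict, (comapSubtypeEquivOfLe hkerV).finrank_eq, hker,
      finrank_span_singleton]
    exact fun h => by simpa using congrFun h 0
  have := LinearMap.finrank_range_add_finrank_ker (L.domRestrict V)
  rw [hrange, hkerL] at this
  exact this.symm

theorem ker_inf_supportedOn_eq_map (a : Fin m → Fin n → ℝ) (T : Finset (Fin m)) :
    LinearMap.ker (expMat n m a).mulVecLin ⊓ supportedOn T =
      map (extendByZero T) (LinearMap.ker
        (Fintype.linearCombination ℝ fun x : T => (Fin.cons 1 (a x) : Fin (n + 1) → ℝ))) := by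
  have hcomp : (expMat n m a).mulVecLin ∘ₗ extendByZero T =
      Fintype.linearCombination ℝ (fun x : T => (Fin.cons 1 (a x) : Fin (n + 1) → ℝ)) := by
    ext x i
    simp [Fintype.linearCombination_apply_single, extendByZero_single, mulVec_single, expMat]
    rfl
  rw [← hcomp, LinearMap.ker_comp, map_comap_eq, range_extendByZero, inf_comm]

theorem finrank_vectorSpan_add_finrank_ker_inf_supportedOn (a : Fin m → Fin n → ℝ)
    {T : Finset (Fin m)} (hT : T.Nonempty) :
    finrank ℝ (vectorSpan ℝ (a '' T)) + 1 +
      finrank ℝ ↥(LinearMap.ker (expMat n m a).mulVecLin ⊓ supportedOn T) = T.card := by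
  have : Nonempty T := hT.to_subtype
  have := LinearMap.finrank_range_add_finrank_ker
    (Fintype.linearCombination ℝ fun x : T => (Fin.cons 1 (a x) : Fin (n + 1) → ℝ))
  rw [Fintype.range_linearCombination, finrank_span_range_cons_one,
    (equivMapOfInjective _ (extendByZero_injective T) _).finrank_eq,
    ← ker_inf_supportedOn_eq_map, Module.finrank_fintype_fun_eq_card, Fintype.card_coe] at this
  rw [Set.image_eq_range]
  exact this

theorem affineIndependent_iff_ker_inf_supportedOn_eq_bot (a : Fin m → Fin n → ℝ)
    (T : Finset (Fin m)) :
    AffineIndependent ℝ (fun x : T => a x) ↔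
      LinearMap.ker (expMat n m a).mulVecLin ⊓ supportedOn T = ⊥ := by
  rcases T.eq_empty_or_nonempty with rfl | hT
  · simpa using affineIndependent_of_subsingleton ℝ _
  · have := finrank_vectorSpan_add_finrank_ker_inf_supportedOn a hT
    rw [affineIndependent_iff_finrank_vectorSpan_eq ℝ _ (n := T.card - 1) (by simp; omega),
      ← Submodule.finrank_eq_zero, show Set.range (fun x : T => a x) = a '' T by ext; simp]
    constructor <;> intro <;> omega

end AffineDependencies

section Plane

variable {ι : Type*}

theorem eq_zero_of_forall_mul_apply_eq_zero {v : ι → ℝ} {c : ℝ} (hv : v ≠ 0)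
    (h : ∀ k, c * v k = 0) : c = 0 :=
  (smul_eq_zero.1 (funext h : c • v = 0)).resolve_right hv

theorem dotProduct_eq_zero_iff_of_dotProduct_eq_zero {p q x : Fin 2 → ℝ} (hp : p ≠ 0)
    (hx : x ≠ 0) (hpx : p ⬝ᵥ x = 0) : q ⬝ᵥ x = 0 ↔ p 0 * q 1 - p 1 * q 0 = 0 := by
  simp only [dotProduct, Fin.sum_univ_two] at hpx ⊢
  constructor
  · intro hqx
    refine eq_zero_of_forall_mul_apply_eq_zero hx (Fin.forall_fin_two.2 ⟨?_, ?_⟩)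
    · linear_combination q 1 * hpx - p 1 * hqx
    · linear_combination p 0 * hqx - q 0 * hpx
  · intro hpq
    refine eq_zero_of_forall_mul_apply_eq_zero hp (Fin.forall_fin_two.2 ⟨?_, ?_⟩)
    · linear_combination q 0 * hpx + x 1 * hpq
    · linear_combination q 1 * hpx - x 0 * hpq

def perpVec (p : Fin 2 → ℝ) : Fin 2 → ℝ := ![p 1, -p 0]

theorem perpVec_ne_zero {p : Fin 2 → ℝ} (hp : p ≠ 0) : perpVec p ≠ 0 := by
  intro h
  refine hp (funext fun k => ?_)
  fin_cases k
  · simpa [perpVec] using congrFun h 1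
  · simpa [perpVec] using congrFun h 0

theorem dotProduct_perpVec (p q : Fin 2 → ℝ) : q ⬝ᵥ perpVec p = -(p 0 * q 1 - p 1 * q 0) := by
  simp [perpVec, dotProduct, Fin.sum_univ_two]
  ring

def collinearRowsSetoid (B : Matrix ι (Fin 2) ℝ) (hB : ∀ i, B i ≠ 0) : Setoid ι where
  r i j := B i 0 * B j 1 - B i 1 * B j 0 = 0
  iseqv.refl i := by ring
  iseqv.symm h := by linear_combination -h
  iseqv.trans {i j k} hij hjk :=
    eq_zero_of_forall_mul_apply_eq_zero (hB j) (Fin.forall_fin_two.2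
      ⟨by linear_combination B k 0 * hij + B i 0 * hjk,
        by linear_combination B k 1 * hij + B i 1 * hjk⟩)

theorem apply_eq_zero_iff_of_mem_range {B : Matrix ι (Fin 2) ℝ} (hB : ∀ i, B i ≠ 0)
    {w : ι → ℝ} (hw : w ∈ LinearMap.range B.mulVecLin) (hw0 : w ≠ 0) {i : ι} (hi : w i = 0)
    (j : ι) : w j = 0 ↔ collinearRowsSetoid B hB i j := by
  obtain ⟨x, rfl⟩ := hw
  have hx : x ≠ 0 := by rintro rfl; simp at hw0
  exact dotProduct_eq_zero_iff_of_dotProduct_eq_zero (hB i) hx hi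

end Plane

section Counting

open Finset

theorem Finpartition.card_parts_add_card_filter_le {α : Type*} [DecidableEq α] {s : Finset α}
    (P : Finpartition s) : #P.parts + #{t ∈ P.parts | 2 ≤ #t} ≤ #s := by
  rw [← P.sum_card_parts, card_filter, card_eq_sum_ones, ← sum_add_distrib]
  refine sum_le_sum fun t ht => ?_
  have := (P.nonempty_of_mem_parts ht).card_pos
  split_ifs <;> omega

variable {α : Type*}

theorem Setoid.classes_eq_setOf (r : Setoid α) : r.classes = {S | ∃ i, S = {j | r i j}} :=
  Set.ext fun _ => exists_congr fun i => by
    rw [show {j | r j i} = {j | r i j} from Set.ext fun _ => r.comm']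

theorem Setoid.classes_eq_image_parts_ofSetoid [Fintype α] [DecidableEq α]
    (r : Setoid α) [DecidableRel r.r] :
    r.classes = (↑) '' ((Finpartition.ofSetoid r).parts : Set (Finset α)) := by
  ext S
  simp only [r.classes_eq_setOf, Finpartition.ofSetoid, Finpartition.ofSetSetoid_parts, coe_image,
    coe_univ, Set.image_univ, ← Set.range_comp, Set.mem_range, Set.mem_ofPred_eq,
    Function.comp_apply, coe_filter, mem_univ, true_and, eq_comm (a := S)]

theorem Setoid.ncard_classes_add_ncard_le [Fintype α] (r : Setoid α) :
    r.classes.ncard + {S ∈ r.classes | 2 ≤ S.ncard}.ncard ≤ Fintype.card α := by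
  classical
  have hbig : {S ∈ r.classes | 2 ≤ S.ncard} =
      (↑) '' (({t ∈ (Finpartition.ofSetoid r).parts | 2 ≤ #t} : Finset _) : Set (Finset α)) := by
    rw [r.classes_eq_image_parts_ofSetoid, coe_filter]
    ext S
    constructor
    · rintro ⟨⟨t, ht, rfl⟩, h2⟩
      exact ⟨t, ⟨ht, by simpa using h2⟩, rfl⟩
    · rintro ⟨t, ⟨ht, h2⟩, rfl⟩
      exact ⟨⟨t, ht, rfl⟩, by simpa using h2⟩
  rw [hbig, r.classes_eq_image_parts_ofSetoid, Set.ncard_image_of_injective _ coe_injective,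
    Set.ncard_image_of_injective _ coe_injective, Set.ncard_coe_finset, Set.ncard_coe_finset,
    ← card_univ]
  exact (Finpartition.ofSetoid r).card_parts_add_card_filter_le

end Counting

def IsCircuit (k : Type*) {V P ι : Type*} [Ring k] [AddCommGroup V] [Module k V]
    [AddTorsor V P] (p : ι → P) (T : Finset ι) : Prop :=
  ¬ AffineIndependent k (fun x : T => p x) ∧ ∀ T' ⊂ T, AffineIndependent k (fun x : T' => p x)

section GaleDual

variable {n d : ℕ} {a : Fin (d + 3) → Fin n → ℝ} {B : Matrix (Fin (d + 3)) (Fin 2) ℝ}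

theorem ker_expMat_mulVecLin_eq_range
    (hdim : finrank ℝ (affineSpan ℝ (Set.range a)).direction = d) (hBrank : B.rank = 2)
    (hgale : expMat n (d + 3) a * B = 0) :
    LinearMap.ker (expMat n (d + 3) a).mulVecLin = LinearMap.range B.mulVecLin := by
  have hle : LinearMap.range B.mulVecLin ≤ LinearMap.ker (expMat n (d + 3) a).mulVecLin := by
    rintro _ ⟨x, rfl⟩
    simp [mulVec_mulVec, hgale]
  have := finrank_vectorSpan_add_finrank_ker_inf_supportedOn a Finset.univ_nonempty
  rw [supportedOn_univ, inf_top_eq, Finset.coe_univ, Set.image_univ, ← direction_affineSpan,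
    hdim, Finset.card_univ, Fintype.card_fin] at this
  exact (eq_of_le_of_finrank_eq hle (by change B.rank = _; omega)).symm

theorem row_ne_zero_of_nonpyramidal
    (hnp : ∀ i, finrank ℝ (affineSpan ℝ (a '' {j | j ≠ i})).direction = d)
    (hker : LinearMap.ker (expMat n (d + 3) a).mulVecLin = LinearMap.range B.mulVecLin)
    (hBrank : B.rank = 2) (i : Fin (d + 3)) : B i ≠ 0 := by
  intro hBi
  have hsub : LinearMap.ker (expMat n (d + 3) a).mulVecLin ≤ supportedOn {i}ᶜ := by
    rw [hker]
    rintro _ ⟨x, rfl⟩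
    refine mem_supportedOn.2 fun j hj => ?_
    rw [Finset.mem_compl, not_not, Finset.mem_singleton] at hj
    subst hj
    simp [mulVec, hBi]
  have hcard : ({i}ᶜ : Finset (Fin (d + 3))).card = d + 2 := by rw [Finset.card_compl]; simp
  have := finrank_vectorSpan_add_finrank_ker_inf_supportedOn a (T := {i}ᶜ)
    (Finset.card_pos.1 (by omega))
  rw [inf_eq_left.2 hsub, hker, hcard, Finset.coe_compl, Finset.coe_singleton,
    Set.compl_singleton_eq, ← direction_affineSpan, hnp] at this
  change d + 1 + B.rank = d + 2 at this
  omega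

theorem finrank_ker_inf_supportedOn_eq_one
    (hker : LinearMap.ker (expMat n (d + 3) a).mulVecLin = LinearMap.range B.mulVecLin)
    (hB : Function.Injective B.mulVec) (hrow : ∀ i, B i ≠ 0) {T : Finset (Fin (d + 3))}
    {i : Fin (d + 3)} (hT : ∀ j, j ∉ T ↔ collinearRowsSetoid B hrow i j) :
    finrank ℝ ↥(LinearMap.ker (expMat n (d + 3) a).mulVecLin ⊓ supportedOn T) = 1 := by
  have hi : i ∉ T := (hT i).2 ((collinearRowsSetoid B hrow).refl' i)
  have hK : finrank ℝ (LinearMap.ker (expMat n (d + 3) a).mulVecLin) = 2 := by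
    rw [hker, LinearMap.finrank_range_of_inj hB, Module.finrank_fin_fun]
  -- `(B *ᵥ B i) i = ‖B i‖² ≠ 0`
  have hlt := finrank_inf_supportedOn_lt hi (v := B *ᵥ B i)
    (K := LinearMap.ker (expMat n (d + 3) a).mulVecLin) (by rw [hker]; exact ⟨B i, rfl⟩)
    (mt dotProduct_self_eq_zero.1 (hrow i))
  have hv : B *ᵥ perpVec (B i) ∈
      LinearMap.ker (expMat n (d + 3) a).mulVecLin ⊓ supportedOn T := by
    refine mem_inf.2 ⟨by rw [hker]; exact ⟨_, rfl⟩, mem_supportedOn.2 fun j hj => ?_⟩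
    change B j ⬝ᵥ perpVec (B i) = 0
    rw [dotProduct_perpVec, (hT j).1 hj, neg_zero]
  have hv0 : B *ᵥ perpVec (B i) ≠ 0 :=
    fun h => perpVec_ne_zero (hrow i) (hB (h.trans (mulVec_zero B).symm))
  have hpos : finrank ℝ ↥(LinearMap.ker (expMat n (d + 3) a).mulVecLin ⊓ supportedOn T) ≠ 0 :=
    fun h => hv0 ((mem_bot ℝ).1 (finrank_eq_zero.1 h ▸ hv))
  omega

theorem finrank_vectorSpan_add_two
    (hker : LinearMap.ker (expMat n (d + 3) a).mulVecLin = LinearMap.range B.mulVecLin)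
    (hB : Function.Injective B.mulVec) (hrow : ∀ i, B i ≠ 0) {T : Finset (Fin (d + 3))}
    {i : Fin (d + 3)} (hT : ∀ j, j ∉ T ↔ collinearRowsSetoid B hrow i j) :
    finrank ℝ (vectorSpan ℝ (a '' T)) + 2 = T.card := by
  have hZ := finrank_ker_inf_supportedOn_eq_one hker hB hrow hT
  rcases T.eq_empty_or_nonempty with rfl | hne
  · rw [supportedOn_empty, inf_bot_eq, finrank_bot] at hZ
    omega
  · have := finrank_vectorSpan_add_finrank_ker_inf_supportedOn a hne
    omega

theorem isCircuit_of_forall_notMem_iff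
    (hker : LinearMap.ker (expMat n (d + 3) a).mulVecLin = LinearMap.range B.mulVecLin)
    (hB : Function.Injective B.mulVec) (hrow : ∀ i, B i ≠ 0) {T : Finset (Fin (d + 3))}
    {i : Fin (d + 3)} (hT : ∀ j, j ∉ T ↔ collinearRowsSetoid B hrow i j) :
    IsCircuit ℝ a T := by
  refine ⟨fun hind => ?_, fun T' hT' => ?_⟩
  · have hZ := finrank_ker_inf_supportedOn_eq_one hker hB hrow hT
    rw [affineIndependent_iff_ker_inf_supportedOn_eq_bot] at hind
    rw [hind, finrank_bot] at hZ
    omega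
  · rw [affineIndependent_iff_ker_inf_supportedOn_eq_bot, eq_bot_iff]
    intro w hw
    rw [mem_bot]
    by_contra hw0
    obtain ⟨hwK, hwT'⟩ := mem_inf.1 hw
    obtain ⟨k, hkT, hkT'⟩ := Finset.exists_of_ssubset hT'
    have hi : i ∉ T' := fun h => (hT i).2 ((collinearRowsSetoid B hrow).refl' i) (hT'.subset h)
    have hwk := mem_supportedOn.1 hwT' k hkT'
    rw [hker] at hwK
    rw [apply_eq_zero_iff_of_mem_range hrow hwK hw0 (mem_supportedOn.1 hwT' i hi), ← hT] at hwk
    exact hwk hkT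

theorem forall_notMem_iff_of_isCircuit
    (hker : LinearMap.ker (expMat n (d + 3) a).mulVecLin = LinearMap.range B.mulVecLin)
    (hrow : ∀ i, B i ≠ 0) {T : Finset (Fin (d + 3))} (hT : IsCircuit ℝ a T) {i : Fin (d + 3)}
    (hi : i ∉ T) (j : Fin (d + 3)) : j ∉ T ↔ collinearRowsSetoid B hrow i j := by
  obtain ⟨w, hw, hw0⟩ := (Submodule.ne_bot_iff _).1
    (mt (affineIndependent_iff_ker_inf_supportedOn_eq_bot a T).2 hT.1)
  obtain ⟨hwK, hwT⟩ := mem_inf.1 hw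
  rw [← apply_eq_zero_iff_of_mem_range hrow (hker ▸ hwK) hw0 (mem_supportedOn.1 hwT i hi)]
  refine ⟨mem_supportedOn.1 hwT j, fun hwj hj => hw0 ?_⟩
  -- otherwise `w` is a dependency of the proper subfamily `T.erase j`
  have hind := hT.2 (T.erase j) (Finset.erase_ssubset hj)
  rw [affineIndependent_iff_ker_inf_supportedOn_eq_bot, eq_bot_iff] at hind
  refine (mem_bot ℝ).1 (hind (mem_inf.2 ⟨hwK, mem_supportedOn.2 fun k hk => ?_⟩))
  by_cases hkj : k = j
  · exact hkj ▸ hwj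
  · exact mem_supportedOn.1 hwT k fun hkT => hk (Finset.mem_erase.2 ⟨hkj, hkT⟩)

theorem isCircuit_and_finrank_lt_iff
    (hdim : finrank ℝ (affineSpan ℝ (Set.range a)).direction = d)
    (hker : LinearMap.ker (expMat n (d + 3) a).mulVecLin = LinearMap.range B.mulVecLin)
    (hB : Function.Injective B.mulVec) (hrow : ∀ i, B i ≠ 0) (T : Finset (Fin (d + 3))) :
    (IsCircuit ℝ a T ∧ finrank ℝ (affineSpan ℝ (a '' T)).direction < d) ↔
      (↑T)ᶜ ∈ (collinearRowsSetoid B hrow).classes ∧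
        2 ≤ ((↑T)ᶜ : Set (Fin (d + 3))).ncard := by
  have hcard : ((↑T)ᶜ : Set (Fin (d + 3))).ncard + T.card = d + 3 := by
    rw [← Finset.coe_compl, Set.ncard_coe_finset, Finset.card_compl, Fintype.card_fin]
    have := T.card_le_univ
    simp only [Fintype.card_fin] at this
    omega
  have hclass (i : Fin (d + 3)) : (↑T)ᶜ = {j | collinearRowsSetoid B hrow j i} ↔
      ∀ j, j ∉ T ↔ collinearRowsSetoid B hrow i j := by
    simp [Set.ext_iff, (collinearRowsSetoid B hrow).comm']
  rw [direction_affineSpan]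
  constructor
  · rintro ⟨hT, hlt⟩
    obtain ⟨i, hi⟩ : ∃ i, i ∉ T := by
      by_contra! h
      rw [Finset.eq_univ_of_forall h, Finset.coe_univ, Set.image_univ, ← direction_affineSpan,
        hdim] at hlt
      exact hlt.false
    have hTi := forall_notMem_iff_of_isCircuit hker hrow hT hi
    have := finrank_vectorSpan_add_two hker hB hrow hTi
    exact ⟨⟨i, (hclass i).2 hTi⟩, by omega⟩
  · rintro ⟨⟨i, hi⟩, h2⟩
    have hTi := (hclass i).1 hi
    have := finrank_vectorSpan_add_two hker hB hrow hTi
    exact ⟨isCircuit_of_forall_notMem_iff hker hB hrow hTi, by omega⟩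

end GaleDual

theorem circuits_eq_big_classes_and_bound_general (n d : ℕ)
    (a : Fin (d + 3) → Fin n → ℝ)
    (hdim : Module.finrank ℝ (affineSpan ℝ (Set.range a)).direction = d)
    (hnp : ∀ i : Fin (d + 3),
      Module.finrank ℝ (affineSpan ℝ (a '' {j | j ≠ i})).direction = d)
    (B : Matrix (Fin (d + 3)) (Fin 2) ℝ) (hBrank : B.rank = 2)
    (hgale : expMat n (d + 3) a * B = 0) :
    let col : Fin (d + 3) → Fin (d + 3) → Prop :=
      fun i j => B i 0 * B j 1 - B i 1 * B j 0 = 0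
    let classes : Set (Set (Fin (d + 3))) := {S | ∃ i, S = {j | col i j}}
    let N : ℕ := {T : Finset (Fin (d + 3)) |
        (¬ AffineIndependent ℝ (fun x : ↥T => a x)) ∧
        (∀ T' : Finset (Fin (d + 3)), T' ⊂ T →
          AffineIndependent ℝ (fun x : ↥T' => a x)) ∧
        Module.finrank ℝ (affineSpan ℝ (a '' (T : Set (Fin (d + 3))))).direction < d}.ncard
    N = {S ∈ classes | 2 ≤ S.ncard}.ncard ∧ N + classes.ncard ≤ d + 3 := by
  intro col classes N
  have hker := ker_expMat_mulVecLin_eq_range hdim hBrank hgale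
  have hrow := row_ne_zero_of_nonpyramidal hnp hker hBrank
  have hB := Matrix.mulVec_injective_of_rank_eq (hBrank.trans (Fintype.card_fin 2).symm)
  set r := collinearRowsSetoid B hrow
  have hclasses : classes = r.classes := r.classes_eq_setOf.symm
  have hN : N = {S ∈ r.classes | 2 ≤ S.ncard}.ncard := by
    classical
    rw [← Set.ncard_preimage_of_injective_subset_range (f := fun T : Finset (Fin (d + 3)) => (↑T)ᶜ)
      (fun _ _ h => Finset.coe_injective (compl_injective h)) fun S _ => ⟨Sᶜ.toFinset, by simp⟩]
    exact congrArg Set.ncard (Set.ext fun T =>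
      and_assoc.symm.trans (isCircuit_and_finrank_lt_iff hdim hker hB hrow T))
  have hcount := r.ncard_classes_add_ncard_le
  rw [Fintype.card_fin] at hcount
  rw [hclasses, hN]
  exact ⟨rfl, by omega⟩

/-- For a non-pyramidal configuration of codimension 2 and dimension `d`, the number of circuits
of dimension `< d` equals the number of collinearity classes of Gale-dual rows having at least
two elements, and this number plus the total number of classes is at most `d + 3`. -/
theorem circuits_eq_big_classes_and_bound (n d : ℕ)
    (a : Fin (d + 3) → Fin n → ℝ) (ha : Function.Injective a)
    (hdim : Module.finrank ℝ (affineSpan ℝ (Set.range a)).direction = d)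
    (hnp : ∀ i : Fin (d + 3),
      Module.finrank ℝ (affineSpan ℝ (a '' {j | j ≠ i})).direction = d)
    (B : Matrix (Fin (d + 3)) (Fin 2) ℝ) (hBrank : B.rank = 2)
    (hgale : expMat n (d + 3) a * B = 0) :
    let col : Fin (d + 3) → Fin (d + 3) → Prop :=
      fun i j => B i 0 * B j 1 - B i 1 * B j 0 = 0
    let classes : Set (Set (Fin (d + 3))) := {S | ∃ i, S = {j | col i j}}
    let N : ℕ := {T : Finset (Fin (d + 3)) |
        (¬ AffineIndependent ℝ (fun x : ↥T => a x)) ∧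
        (∀ T' : Finset (Fin (d + 3)), T' ⊂ T →
          AffineIndependent ℝ (fun x : ↥T' => a x)) ∧
        Module.finrank ℝ (affineSpan ℝ (a '' (T : Set (Fin (d + 3))))).direction < d}.ncard
    N = {S ∈ classes | 2 ≤ S.ncard}.ncard ∧ N + classes.ncard ≤ d + 3 :=
  circuits_eq_big_classes_and_bound_general n d a hdim hnp B hBrank hgale
end

section
/- Let A ⊆ ℝ^n be a finite set with exponent matrix A (columns (1,a), a ∈ A), let c = (c_a) ∈ (ℝ*)^A, and let C be the matrix obtained from A by multiplying the column indexed by a by c_a. Let D be a Gale dual of C. Suppose there exists a nonempty coface J of A (i.e., A∖J = A ∩ F for some face F of the convex hull of A) such that all coefficients c_a with a ∈ J have the same sign (all positive or all negative). Then the open dual cone C_D^ν = { y : ⟨D_a, y⟩ > 0 for all a ∈ A } is empty, and consequently the critical system C·(x^{a_0},…,x^{a_{n+k}})^T = 0 has no solution x ∈ (ℝ_{>0})^n. -/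
open Matrix BigOperators

/-- Coefficient matrix: the exponent matrix with column `j` multiplied by `c j`. -/
noncomputable def coeffMat (n s : ℕ) (a : Fin s → Fin n → ℝ) (c : Fin s → ℝ) :
    Matrix (Fin (n + 1)) (Fin s) ℝ :=
  Matrix.of fun i j => c j * expMat n s a i j

lemma no_pos_kernel (n k : ℕ) (a : Fin (n + k + 1) → Fin n → ℝ)
    (c : Fin (n + k + 1) → ℝ)
    (J : Finset (Fin (n + k + 1))) (hJ : J.Nonempty)
    (hcoface : ∃ ℓ : (Fin n → ℝ) →ᵃ[ℝ] ℝ,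
      (∀ j, 0 ≤ ℓ (a j)) ∧ ∀ j, (j ∈ J ↔ 0 < ℓ (a j)))
    (hsign : (∀ j ∈ J, 0 < c j) ∨ (∀ j ∈ J, c j < 0))
    (w : Fin (n + k + 1) → ℝ) (hw : ∀ j, 0 < w j)
    (hker : (coeffMat n (n + k + 1) a c).mulVec w = 0) : False := by
  obtain ⟨ℓ, hℓ0, hℓJ⟩ := hcoface
  have hrow : ∀ i : Fin (n + 1), ∑ j, c j * expMat n (n + k + 1) a i j * w j = 0 := by
    intro i
    have := congrFun hker i
    simpa [Matrix.mulVec, dotProduct, coeffMat] using this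
  have hrow0 : ∑ j, c j * w j = 0 := by
    have := hrow 0
    simpa [expMat] using this
  have hrowr : ∀ r : Fin n, ∑ j, c j * a j r * w j = 0 := by
    intro r
    have := hrow r.succ
    simpa [expMat] using this
  set L : Fin n → ℝ := fun r => ℓ.linear (Pi.single r 1) with hL
  have hdecomp : ∀ j, ℓ (a j) = (∑ r, a j r * L r) + ℓ 0 := by
    intro j
    have h1 : ℓ (a j) = ℓ.linear (a j) + ℓ 0 := by
      have := ℓ.map_vadd (0 : Fin n → ℝ) (a j)
      simpa using this
    have h2 : ℓ.linear (a j) = ∑ r, a j r * L r := by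
      have hb : ∀ r : Fin n, (fun t => if r = t then (1:ℝ) else 0) = Pi.single r 1 := by
        intro r; ext t; simp [Pi.single_apply, eq_comm]
      rw [LinearMap.pi_apply_eq_sum_univ ℓ.linear (a j)]
      refine Finset.sum_congr rfl fun r _ => ?_
      rw [hb r]; simp [hL, smul_eq_mul]
    rw [h1, h2]
  have hS0 : ∑ j, c j * w j * ℓ (a j) = 0 := by
    calc ∑ j, c j * w j * ℓ (a j)
        = ∑ j, ((∑ r, c j * a j r * w j * L r) + c j * w j * ℓ 0) := by
          refine Finset.sum_congr rfl fun j _ => ?_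
          rw [hdecomp j, mul_add, Finset.mul_sum]
          congr 1
          exact Finset.sum_congr rfl fun r _ => by ring
      _ = (∑ j, ∑ r, c j * a j r * w j * L r) + ∑ j, c j * w j * ℓ 0 :=
          Finset.sum_add_distrib
      _ = (∑ r, (∑ j, c j * a j r * w j) * L r) + (∑ j, c j * w j) * ℓ 0 := by
          rw [Finset.sum_comm, ← Finset.sum_mul]
          congr 1
          exact Finset.sum_congr rfl fun r _ => (Finset.sum_mul _ _ _).symm
      _ = 0 := by simp [hrowr, hrow0]
  have hSJ : ∑ j, c j * w j * ℓ (a j) = ∑ j ∈ J, c j * w j * ℓ (a j) := by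
    refine (Finset.sum_subset (Finset.subset_univ J) fun j _ hj => ?_).symm
    have : ℓ (a j) = 0 := le_antisymm (by simpa [hℓJ j] using hj) (hℓ0 j)
    simp [this]
  rcases hsign with hpos | hneg
  · have : 0 < ∑ j ∈ J, c j * w j * ℓ (a j) :=
      Finset.sum_pos (fun j hj => mul_pos (mul_pos (hpos j hj) (hw j)) ((hℓJ j).1 hj)) hJ
    rw [← hSJ, hS0] at this; exact lt_irrefl 0 this
  · have : ∑ j ∈ J, c j * w j * ℓ (a j) < 0 :=
      Finset.sum_neg (fun j hj => mul_neg_of_neg_of_pos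
        (mul_neg_of_neg_of_pos (hneg j hj) (hw j)) ((hℓJ j).1 hj)) hJ
    rw [← hSJ, hS0] at this; exact lt_irrefl 0 this

/-- If there is a nonempty coface `J` of `A` on which all coefficients `c_a` have the same sign,
then the dual cone `{y : ⟨D_a, y⟩ > 0 ∀ a}` is empty and the critical system has no positive
solution. -/
theorem coface_sign_implies_no_positive_solution (n k : ℕ)
    (a : Fin (n + k + 1) → Fin n → ℝ) (ha : Function.Injective a)
    (hspan : affineSpan ℝ (Set.range a) = ⊤)
    (c : Fin (n + k + 1) → ℝ) (hc : ∀ j, c j ≠ 0)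
    (D : Matrix (Fin (n + k + 1)) (Fin k) ℝ)
    (hD : coeffMat n (n + k + 1) a c * D = 0) (hDrank : D.rank = k)
    (J : Finset (Fin (n + k + 1))) (hJ : J.Nonempty)
    (hcoface : ∃ ℓ : (Fin n → ℝ) →ᵃ[ℝ] ℝ,
      (∀ j, 0 ≤ ℓ (a j)) ∧ ∀ j, (j ∈ J ↔ 0 < ℓ (a j)))
    (hsign : (∀ j ∈ J, 0 < c j) ∨ (∀ j ∈ J, c j < 0)) :
    (¬ ∃ y : Fin k → ℝ, ∀ i, 0 < D i ⬝ᵥ y) ∧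
    ¬ ∃ x : Fin n → ℝ, (∀ r, 0 < x r) ∧
        (coeffMat n (n + k + 1) a c).mulVec (fun j => ∏ r, x r ^ a j r) = 0 := by
  constructor
  · rintro ⟨y, hy⟩
    refine no_pos_kernel n k a c J hJ hcoface hsign (D.mulVec y) hy ?_
    rw [Matrix.mulVec_mulVec, hD]
    simp
  · rintro ⟨x, hx, hker⟩
    exact no_pos_kernel n k a c J hJ hcoface hsign _
      (fun j => Finset.prod_pos fun r _ => Real.rpow_pos_of_pos (hx r) _) hker
end

section
/- Let A = {a_0,…,a_{n+1}} ⊆ ℝ^n be a circuit (codimension 1, all coefficients of its unique affine relation nonzero) with affine relation ∑_a λ_a·a = 0, ∑_a λ_a = 0. Let h = (h_a) be real heights with ∑_a h_a λ_a ≠ 0, and let c ∈ (ℝ*)^A be sign compatible with A (all c_a λ_a of the same sign). Then the hypersurface ∑_a c_a t^{h_a} x^a = 0 has a singular point in (ℝ_{>0})^n for exactly one value t > 0 of the parameter, namely t_A = (∏_a (λ_a/c_a)^{λ_a})^{1/∑_a h_a λ_a}, and for t = t_A the positive singular point is unique. -/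
/-!
At a critical point the vector of monomial values `(c_i t^{h_i} x^{a_i})_i` lies in the kernel of
`y ↦ ∑ y_i (1, a_i)`, which the spanning hypothesis makes the line through `λ`. Sign compatibility
turns this into proportionality of the positive vector `(t^{h_i} x^{a_i})_i` to `μ = |λ / c|`, and
after taking logarithms into the linear system `ρ + ⟨a_i, log x⟩ = log μ_i - h_i log t`. Its matrix,
with rows `(1, a_i)`, is injective and its range is the hyperplane orthogonal to `λ`. Pairing with
`λ` gives `(∑ h_i λ_i) log t = ∑ λ_i log μ_i`, which pins down `t = t_A`, and injectivity gives the
uniqueness of `x`.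
-/

open Module

theorem LinearMap.range_eq_ker_of_finrank_add_finrank_eq {K A B C : Type*} [Field K]
    [AddCommGroup A] [Module K A] [AddCommGroup B] [Module K B] [AddCommGroup C] [Module K C]
    [FiniteDimensional K B] {f : A →ₗ[K] B} {g : B →ₗ[K] C}
    (hf : Function.Injective f) (hg : Function.Surjective g) (hgf : g ∘ₗ f = 0)
    (hdim : finrank K A + finrank K C = finrank K B) :
    LinearMap.range f = LinearMap.ker g := by
  refine Submodule.eq_of_le_of_finrank_eq (LinearMap.range_le_ker_iff.mpr hgf) ?_
  have := LinearMap.finrank_range_add_finrank_ker g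
  rw [LinearMap.range_eq_top.mpr hg, finrank_top] at this
  rw [LinearMap.finrank_range_of_inj hf]
  omega

namespace Matrix

variable {K ι κ : Type*} [Field K] [Fintype ι] [Fintype κ] {M : Matrix ι κ K}

theorem vecMul_surjective_of_mulVec_injective (hM : Function.Injective M.mulVec) :
    Function.Surjective M.vecMul := by
  have hrank : finrank K (LinearMap.range Mᵀ.mulVecLin) = finrank K (κ → K) := by
    rw [← rank, rank_transpose, rank, LinearMap.finrank_range_of_inj hM]
  rw [← coe_vecMulLinear, ← LinearMap.range_eq_top, ← mulVecLin_transpose]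
  exact Submodule.eq_top_of_finrank_eq hrank

theorem vecMul_eq_zero_iff_mem_span_singleton (hM : Function.Injective M.mulVec)
    (hcard : Fintype.card ι = Fintype.card κ + 1) {ν : ι → K} (hν : ν ≠ 0) (hνM : ν ᵥ* M = 0)
    (y : ι → K) : y ᵥ* M = 0 ↔ y ∈ K ∙ ν := by
  have hexact := LinearMap.range_eq_ker_of_finrank_add_finrank_eq
    (f := LinearMap.toSpanSingleton K (ι → K) ν) (smul_left_injective K hν)
    (g := M.vecMulLinear) (vecMul_surjective_of_mulVec_injective hM)
    (LinearMap.ext_ring (by simpa using hνM))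
    (by simp [finrank_fintype_fun_eq_card, hcard, add_comm])
  rw [LinearMap.span_singleton_eq_range, hexact, LinearMap.mem_ker, vecMulLinear_apply]

theorem mem_range_mulVec_iff_dotProduct_eq_zero (hM : Function.Injective M.mulVec)
    (hcard : Fintype.card ι = Fintype.card κ + 1) {ν : ι → K} (hν : ν ≠ 0) (hνM : ν ᵥ* M = 0)
    (v : ι → K) : v ∈ Set.range M.mulVec ↔ ν ⬝ᵥ v = 0 := by
  classical
  have hsurj : Function.Surjective (dotProductBilin K K ν) := by
    obtain ⟨i, hi⟩ := Function.ne_iff.mp hν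
    exact fun r => ⟨Pi.single i (r / ν i), by simp [mul_div_cancel₀ r hi]⟩
  have hexact := LinearMap.range_eq_ker_of_finrank_add_finrank_eq (f := M.mulVecLin) hM hsurj
    (LinearMap.ext fun w => by simp [dotProduct_mulVec, hνM])
    (by simp [finrank_fintype_fun_eq_card, hcard])
  rw [← M.coe_mulVecLin, ← LinearMap.coe_range, hexact]
  simp

end Matrix

open Matrix

namespace Circuit

section

variable {K ι : Type*} [Field K] {n : ℕ}

def augmentedMatrix (a : ι → Fin n → K) : Matrix ι (Fin (n + 1)) K :=
  of fun i => Fin.cons 1 (a i)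

theorem augmentedMatrix_mulVec_apply (a : ι → Fin n → K) (w : Fin (n + 1) → K) (i : ι) :
    (augmentedMatrix a *ᵥ w) i = w 0 + ∑ j, a i j * w j.succ := by
  simp [augmentedMatrix, mulVec, dotProduct, Fin.sum_univ_succ]

theorem vecMul_augmentedMatrix_eq_zero_iff [Fintype ι] (a : ι → Fin n → K) (y : ι → K) :
    y ᵥ* augmentedMatrix a = 0 ↔ ∑ i, y i = 0 ∧ ∀ r, ∑ i, a i r * y i = 0 := by
  simp [funext_iff, Fin.forall_fin_succ, augmentedMatrix, vecMul, dotProduct, mul_comm]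

theorem mulVec_augmentedMatrix_injective {a : ι → Fin n → K}
    (hspan : affineSpan K (Set.range a) = ⊤) : Function.Injective (augmentedMatrix a).mulVec := by
  refine (injective_iff_map_eq_zero (augmentedMatrix a).mulVecLin).mpr fun w hw => ?_
  let F : (Fin n → K) →ᵃ[K] K :=
    (Fintype.linearCombination K (Fin.tail w)).toAffineMap + AffineMap.const K _ (w 0)
  have hF : F = 0 := AffineMap.ext_on hspan <| by
    rintro - ⟨i, rfl⟩
    simpa [F, Fin.tail, Fintype.linearCombination_apply, augmentedMatrix_mulVec_apply, add_comm]
      using congrFun hw i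
  have h0 : w 0 = 0 := by simpa [F] using congrArg (· 0) hF
  funext k
  refine Fin.cases h0 (fun j => ?_) k
  simpa [F, Fin.tail, h0] using congrArg (· (Pi.single j 1)) hF

end

section

variable {ι : Type*} {n : ℕ}

theorem mul_abs_div_eq_or_eq_neg {𝕜 : Type*} [Field 𝕜] [LinearOrder 𝕜] [IsStrictOrderedRing 𝕜]
    {c lam : ι → 𝕜} (hc : ∀ i, c i ≠ 0)
    (hsign : (∀ i, 0 < c i * lam i) ∨ (∀ i, c i * lam i < 0)) :
    (c * fun i => |lam i / c i|) = lam ∨ (c * fun i => |lam i / c i|) = -lam := by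
  have hquot : ∀ i, lam i / c i = c i * lam i / (c i * c i) :=
    fun i => (mul_div_mul_left (lam i) (c i) (hc i)).symm
  rcases hsign with hpos | hneg
  · refine Or.inl (funext fun i => ?_)
    have : 0 < lam i / c i := hquot i ▸ div_pos (hpos i) (mul_self_pos.mpr (hc i))
    simp [abs_of_pos this, mul_div_cancel₀ _ (hc i)]
  · refine Or.inr (funext fun i => ?_)
    have : lam i / c i < 0 := hquot i ▸ div_neg_of_neg_of_pos (hneg i) (mul_self_pos.mpr (hc i))
    simp [abs_of_neg this, mul_div_cancel₀ _ (hc i)]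

theorem mul_mem_span_singleton_mul_iff [Nonempty ι] {c e μ : ι → ℝ}
    (hc : ∀ i, c i ≠ 0) (he : ∀ i, 0 < e i) (hμ : ∀ i, 0 < μ i) :
    c * e ∈ ℝ ∙ (c * μ) ↔ ∃ ρ : ℝ, ∀ i, Real.log (e i) = ρ + Real.log (μ i) := by
  rw [Submodule.mem_span_singleton]
  constructor
  · rintro ⟨s, hs⟩
    have hes : ∀ i, e i = s * μ i := fun i =>
      mul_left_cancel₀ (hc i) (by simpa [mul_left_comm] using (congrFun hs i).symm)
    obtain ⟨i₀⟩ := ‹Nonempty ι›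
    have hs : 0 < s := pos_of_mul_pos_left (hes i₀ ▸ he i₀) (hμ i₀).le
    exact ⟨Real.log s, fun i => by rw [hes i, Real.log_mul hs.ne' (hμ i).ne']⟩
  · rintro ⟨ρ, hρ⟩
    refine ⟨Real.exp ρ, funext fun i => ?_⟩
    have : e i = Real.exp ρ * μ i := by
      rw [← Real.exp_log (he i), hρ i, Real.exp_add, Real.exp_log (hμ i)]
    simp [this, mul_left_comm]

theorem log_rpow_mul_prod_rpow {t : ℝ} (ht : 0 < t) {x : Fin n → ℝ} (hx : ∀ j, 0 < x j)
    (h : ℝ) (b : Fin n → ℝ) :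
    Real.log (t ^ h * ∏ j, x j ^ b j) = h * Real.log t + ∑ j, b j * Real.log (x j) := by
  rw [Real.log_mul (Real.rpow_pos_of_pos ht h).ne'
      (Finset.prod_pos fun j _ => Real.rpow_pos_of_pos (hx j) _).ne',
    Real.log_rpow ht, Real.log_prod fun j _ => (Real.rpow_pos_of_pos (hx j) _).ne']
  simp_rw [Real.log_rpow (hx _)]

noncomputable def logCoords (ρ : ℝ) (x : Fin n → ℝ) : Fin (n + 1) → ℝ :=
  Fin.cons ρ (Real.log ∘ x)

theorem exists_pos_logCoords_iff (P : (Fin (n + 1) → ℝ) → Prop) :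
    (∃ x : Fin n → ℝ, (∀ j, 0 < x j) ∧ ∃ ρ, P (logCoords ρ x)) ↔ ∃ w, P w := by
  refine ⟨fun ⟨x, _, ρ, hP⟩ => ⟨_, hP⟩, fun ⟨w, hP⟩ => ⟨Real.exp ∘ Fin.tail w,
    fun j => Real.exp_pos _, w 0, ?_⟩⟩
  convert hP
  simp [logCoords, Function.comp_def]

theorem eq_of_logCoords_eq {x y : Fin n → ℝ} (hx : ∀ j, 0 < x j) (hy : ∀ j, 0 < y j) {ρ ρ' : ℝ}
    (h : logCoords ρ x = logCoords ρ' y) : x = y := by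
  funext j
  have := congrFun h j.succ
  simp only [logCoords, Fin.cons_succ, Function.comp_apply] at this
  exact Real.log_injOn_pos (hx j) (hy j) this

def IsPositiveSingularPoint [Fintype ι] (c h : ι → ℝ) (a : ι → Fin n → ℝ) (t : ℝ)
    (x : Fin n → ℝ) : Prop :=
  (∀ j, 0 < x j) ∧ (∑ i, c i * t ^ h i * ∏ j, x j ^ a i j) = 0 ∧
    ∀ r, (∑ i, a i r * (c i * t ^ h i * ∏ j, x j ^ a i j)) = 0

theorem isPositiveSingularPoint_iff [Fintype ι] [Nonempty ι] {c h μ : ι → ℝ}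
    {a : ι → Fin n → ℝ} (hc : ∀ i, c i ≠ 0) (hμ : ∀ i, 0 < μ i)
    (hker : ∀ y, y ᵥ* augmentedMatrix a = 0 ↔ y ∈ ℝ ∙ (c * μ)) {t : ℝ} (ht : 0 < t)
    (x : Fin n → ℝ) :
    IsPositiveSingularPoint c h a t x ↔ (∀ j, 0 < x j) ∧
      ∃ ρ, augmentedMatrix a *ᵥ logCoords ρ x = fun i => Real.log (μ i) - h i * Real.log t := by
  refine and_congr_right fun hx => ?_
  set e : ι → ℝ := fun i => t ^ h i * ∏ j, x j ^ a i j
  have he : ∀ i, 0 < e i := fun i =>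
    mul_pos (Real.rpow_pos_of_pos ht _) (Finset.prod_pos fun j _ => Real.rpow_pos_of_pos (hx j) _)
  have hsys := vecMul_augmentedMatrix_eq_zero_iff a (c * e)
  simp only [Pi.mul_apply, e, mul_assoc] at hsys ⊢
  rw [← hsys, hker, mul_mem_span_singleton_mul_iff hc he hμ]
  simp only [e, log_rpow_mul_prod_rpow ht hx, funext_iff, augmentedMatrix_mulVec_apply,
    logCoords, Fin.cons_zero, Fin.cons_succ, Function.comp_apply]
  exact ⟨fun ⟨ρ, hρ⟩ => ⟨-ρ, fun i => by linarith [hρ i]⟩,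
    fun ⟨ρ, hρ⟩ => ⟨-ρ, fun i => by linarith [hρ i]⟩⟩

theorem dotProduct_log_sub_eq_zero_iff [Fintype ι] {lam h μ : ι → ℝ}
    (hμ : ∀ i, 0 < μ i) (hh : ∑ i, h i * lam i ≠ 0) {t : ℝ} (ht : 0 < t) :
    lam ⬝ᵥ (fun i => Real.log (μ i) - h i * Real.log t) = 0 ↔
      t = (∏ i, μ i ^ lam i) ^ (1 / ∑ i, h i * lam i) := by
  have hP : 0 < ∏ i, μ i ^ lam i := Finset.prod_pos fun i _ => Real.rpow_pos_of_pos (hμ i) _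
  have hlogP : Real.log (∏ i, μ i ^ lam i) = ∑ i, lam i * Real.log (μ i) := by
    rw [Real.log_prod fun i _ => (Real.rpow_pos_of_pos (hμ i) _).ne']
    simp_rw [Real.log_rpow (hμ _)]
  have hdot : lam ⬝ᵥ (fun i => Real.log (μ i) - h i * Real.log t) =
      Real.log (∏ i, μ i ^ lam i) - (∑ i, h i * lam i) * Real.log t := by
    simp only [dotProduct, mul_sub, Finset.sum_sub_distrib, hlogP, Finset.sum_mul]
    congr 1
    exact Finset.sum_congr rfl fun i _ => by ring
  rw [hdot, sub_eq_zero, ← Real.log_injOn_pos.eq_iff ht (Real.rpow_pos_of_pos hP _),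
    Real.log_rpow hP, one_div, eq_inv_mul_iff_mul_eq₀ hh, eq_comm]

end

end Circuit

open Circuit in
/-- For a circuit `A = {a_0,…,a_{n+1}} ⊆ ℝⁿ` with affine relation `λ`, generic heights `h`
(`∑ h_a λ_a ≠ 0`) and sign-compatible coefficients `c`, the Viro hypersurface
`∑ c_a t^{h_a} x^a = 0` has a positive singular point for exactly one `t > 0`, namely
`t_A = (∏ |λ_a/c_a|^{λ_a})^{1/∑ h_a λ_a}`, and for `t = t_A` the positive singular point is
unique. -/
theorem circuit_unique_critical_parameter (n : ℕ)
    (a : Fin (n + 2) → Fin n → ℝ) (hspan : affineSpan ℝ (Set.range a) = ⊤)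
    (lam : Fin (n + 2) → ℝ) (hrel0 : ∑ i, lam i = 0) (hrel : ∑ i, lam i • a i = 0)
    (hlam : ∀ i, lam i ≠ 0)
    (h : Fin (n + 2) → ℝ) (hh : (∑ i, h i * lam i) ≠ 0)
    (c : Fin (n + 2) → ℝ) (hc : ∀ i, c i ≠ 0)
    (hsign : (∀ i, 0 < c i * lam i) ∨ (∀ i, c i * lam i < 0)) :
    let tA : ℝ := (∏ i, |lam i / c i| ^ lam i) ^ (1 / ∑ i, h i * lam i)
    (∀ t : ℝ, 0 < t →
      ((∃ x : Fin n → ℝ, (∀ j, 0 < x j) ∧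
          (∑ i, c i * t ^ h i * ∏ j, x j ^ a i j) = 0 ∧
          ∀ r : Fin n, (∑ i, a i r * (c i * t ^ h i * ∏ j, x j ^ a i j)) = 0)
        ↔ t = tA)) ∧
    ∃! x : Fin n → ℝ, (∀ j, 0 < x j) ∧
        (∑ i, c i * tA ^ h i * ∏ j, x j ^ a i j) = 0 ∧
        ∀ r : Fin n, (∑ i, a i r * (c i * tA ^ h i * ∏ j, x j ^ a i j)) = 0 := by
  intro tA
  let μ : Fin (n + 2) → ℝ := fun i => |lam i / c i|
  have hμ : ∀ i, 0 < μ i := fun i => abs_pos.mpr (div_ne_zero (hlam i) (hc i))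
  have hM := mulVec_augmentedMatrix_injective hspan
  have hcard : Fintype.card (Fin (n + 2)) = Fintype.card (Fin (n + 1)) + 1 := by simp
  have hlamM : lam ᵥ* augmentedMatrix a = 0 := (vecMul_augmentedMatrix_eq_zero_iff a lam).mpr
    ⟨hrel0, fun r => by simpa [mul_comm] using congrFun hrel r⟩
  obtain ⟨hνM, hdot⟩ : (c * μ) ᵥ* augmentedMatrix a = 0 ∧
      ∀ v, (c * μ) ⬝ᵥ v = 0 ↔ lam ⬝ᵥ v = 0 := by
    rcases mul_abs_div_eq_or_eq_neg hc hsign with hcμ | hcμ <;> simp [μ, hcμ, hlamM, neg_vecMul]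
  have hν : c * μ ≠ 0 := fun h0 => mul_ne_zero (hc 0) (hμ 0).ne' (congrFun h0 0)
  have hcrit (t : ℝ) (ht : 0 < t) := isPositiveSingularPoint_iff (h := h) hc hμ
    (vecMul_eq_zero_iff_mem_span_singleton hM hcard hν hνM) ht
  have hexists (t : ℝ) (ht : 0 < t) : (∃ x, IsPositiveSingularPoint c h a t x) ↔ t = tA := by
    simp_rw [hcrit t ht]
    refine (exists_pos_logCoords_iff (augmentedMatrix a *ᵥ · = _)).trans ?_
    rw [← Set.mem_range, mem_range_mulVec_iff_dotProduct_eq_zero hM hcard hν hνM, hdot,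
      dotProduct_log_sub_eq_zero_iff hμ hh ht]
  have htA : 0 < tA :=
    Real.rpow_pos_of_pos (Finset.prod_pos fun i _ => Real.rpow_pos_of_pos (hμ i) _) _
  refine ⟨hexists, ?_⟩
  obtain ⟨x, hx⟩ := (hexists tA htA).mpr rfl
  refine ⟨x, hx, fun y hy => ?_⟩
  obtain ⟨hypos, ρ, hρ⟩ := (hcrit tA htA y).mp hy
  obtain ⟨hxpos, ρ', hρ'⟩ := (hcrit tA htA x).mp hx
  exact eq_of_logCoords_eq hypos hxpos (hM (hρ.trans hρ'.symm))
end

section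
/- Let A ⊆ ℝ^n be a finite set of dimension n and codimension 1 whose exponent matrix A has rank n+1, with unique (up to scale) affine relation λ = (λ_a). Let h be heights such that the extended matrix A^h (A with the row (h_a) appended) has rank n+2. If c ∈ (ℝ*)^A is sign compatible with A (all c_a λ_a > 0 or all c_a λ_a < 0), then the critical system A·diag(c)·(t^{h_a} x^a)_a = 0 has exactly one solution (x,t) ∈ (ℝ_{>0})^{n+1}, and this solution is simple; if c is not sign compatible, there is no positive solution. -/
/-!
Invertibility of `A^h` makes `ker A` the line `ℝ λ`. At a positive solution the vector of terms
`c_a t^{h_a} x^a` lies in `ker A`, hence equals `s λ`; its entries have the signs of the `c_a`,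
which forces sign compatibility. Conversely, normalising `λ` so that every `c_a λ_a > 0`, taking
logarithms turns "terms `= s λ` with `s > 0`" into the square system
`(A^h)ᵀ (-log s, log x, log t) = (log (λ_a / c_a))_a`, which has exactly one solution. The
Jacobian sends a direction `p` to `A (terms ⊙ q)` with `q = (A^h)ᵀ (0, p_x / x, p_t / t)`; if this
vanishes, `terms ⊙ q ∈ ℝ λ = ℝ terms`, so `q` is constant, and invertibility of `(A^h)ᵀ` gives
`p = 0`.
-/

open Matrix BigOperators

/-- The exponent matrix with the row of heights `h` appended. -/
noncomputable def expMatH (n : ℕ) (a : Fin (n + 2) → Fin n → ℝ) (h : Fin (n + 2) → ℝ) :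
    Matrix (Fin (n + 2)) (Fin (n + 2)) ℝ :=
  Matrix.of fun i j =>
    Fin.lastCases (motive := fun _ => ℝ) (h j) (fun r => expMat n (n + 2) a r j) i

namespace Matrix

variable {K : Type*} [Field K]

theorem isUnit_of_rank_eq_card {m : Type*} [Fintype m] [DecidableEq m] {A : Matrix m m K}
    (hA : A.rank = Fintype.card m) : IsUnit A := by
  rw [← mulVec_surjective_iff_isUnit, ← coe_mulVecLin, ← LinearMap.range_eq_top]
  apply Submodule.eq_top_of_finrank_eq
  rwa [Module.finrank_fintype_fun_eq_card]

theorem exists_eq_smul_of_init_mulVec_eq_zero {m : ℕ} {ι : Type*} [Fintype ι]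
    {M : Matrix (Fin (m + 1)) ι K} (hM : Function.Injective M.mulVec) {l v : ι → K} (hl : l ≠ 0)
    (hMl : Fin.init (M *ᵥ l) = 0) (hMv : Fin.init (M *ᵥ v) = 0) : ∃ s : K, v = s • l := by
  set μ : (ι → K) → K := fun w => (M *ᵥ w) (Fin.last m)
  have hμl : μ l ≠ 0 := by
    intro h0
    apply hl
    apply hM
    ext i
    refine Fin.lastCases ?_ (fun i => ?_) i
    · simpa using h0
    · simpa [Fin.init] using congrFun hMl i
  refine ⟨μ v / μ l, hM ?_⟩
  ext i
  refine Fin.lastCases ?_ (fun i => ?_) i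
  · simp [mulVec_smul, μ, hμl]
  · have hl' := congrFun hMl i
    have hv' := congrFun hMv i
    simp only [Fin.init, Pi.zero_apply] at hl' hv'
    simp [mulVec_smul, hl', hv']

end Matrix

section ViroTerms

variable {ι : Type*} {n : ℕ} (a : ι → Fin n → ℝ) (h c : ι → ℝ)

noncomputable def viroTerms (z : (Fin n → ℝ) × ℝ) : ι → ℝ :=
  fun j => c j * z.2 ^ h j * ∏ r, z.1 r ^ a j r

variable {a h c} {z : (Fin n → ℝ) × ℝ}

theorem viroTerms_eq_exp (hx : ∀ r, 0 < z.1 r) (ht : 0 < z.2) (j : ι) :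
    viroTerms a h c z j = c j * Real.exp (∑ r, a j r * Real.log (z.1 r) + h j * Real.log z.2) := by
  simp only [viroTerms, Real.exp_add, Real.exp_sum, Real.rpow_def_of_pos ht,
    Real.rpow_def_of_pos (hx _), mul_comm (Real.log _)]
  ring

theorem mul_viroTerms_pos (hc : ∀ j, c j ≠ 0) (hx : ∀ r, 0 < z.1 r) (ht : 0 < z.2) (j : ι) :
    0 < c j * viroTerms a h c z j := by
  rw [viroTerms_eq_exp hx ht, ← mul_assoc]
  exact mul_pos (mul_self_pos.mpr (hc j)) (Real.exp_pos _)

theorem hasFDerivAt_viroTerms_apply (hx : ∀ r, 0 < z.1 r) (ht : 0 < z.2) (j : ι) :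
    HasFDerivAt (fun z => viroTerms a h c z j) (viroTerms a h c z j •
      (∑ r, (a j r / z.1 r) • (ContinuousLinearMap.proj r ∘L ContinuousLinearMap.fst ℝ _ ℝ) +
        (h j / z.2) • ContinuousLinearMap.snd ℝ (Fin n → ℝ) ℝ)) z := by
  have hlog : HasFDerivAt
      (fun z : (Fin n → ℝ) × ℝ => ∑ r, a j r * Real.log (z.1 r) + h j * Real.log z.2)
      (∑ r, (a j r / z.1 r) • (ContinuousLinearMap.proj r ∘L ContinuousLinearMap.fst ℝ _ ℝ) +
        (h j / z.2) • ContinuousLinearMap.snd ℝ (Fin n → ℝ) ℝ) z := by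
    refine (HasFDerivAt.fun_sum fun r _ => ?_).add ?_
    · have hr : HasFDerivAt (fun w : (Fin n → ℝ) × ℝ => w.1 r)
          (ContinuousLinearMap.proj r ∘L ContinuousLinearMap.fst ℝ _ ℝ) z :=
        (ContinuousLinearMap.proj (R := ℝ) (φ := fun _ : Fin n => ℝ) r ∘L
          ContinuousLinearMap.fst ℝ (Fin n → ℝ) ℝ).hasFDerivAt
      rw [div_eq_mul_inv, ← smul_smul]
      exact (hr.log (hx r).ne').const_mul (a j r)
    · rw [div_eq_mul_inv, ← smul_smul]
      exact (hasFDerivAt_snd.log ht.ne').const_mul (h j)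
  have hpos : ∀ᶠ w in nhds z, (∀ r, 0 < w.1 r) ∧ 0 < w.2 := by
    refine (Filter.eventually_all.mpr fun r => ?_).and ?_
    · exact ((continuous_apply r).comp continuous_fst).continuousAt.eventually
        (lt_mem_nhds (hx r))
    · exact continuous_snd.continuousAt.eventually (lt_mem_nhds ht)
  have hexp := (hlog.exp).const_mul (c j)
  rw [smul_smul, ← viroTerms_eq_exp hx ht] at hexp
  exact hexp.congr_of_eventuallyEq (hpos.mono fun w hw => viroTerms_eq_exp hw.1 hw.2 j)

theorem hasFDerivAt_viroTerms [Fintype ι] (hx : ∀ r, 0 < z.1 r) (ht : 0 < z.2) :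
    HasFDerivAt (viroTerms a h c) (ContinuousLinearMap.pi fun j => viroTerms a h c z j •
      (∑ r, (a j r / z.1 r) • (ContinuousLinearMap.proj r ∘L ContinuousLinearMap.fst ℝ _ ℝ) +
        (h j / z.2) • ContinuousLinearMap.snd ℝ (Fin n → ℝ) ℝ)) z :=
  hasFDerivAt_pi.mpr fun j => hasFDerivAt_viroTerms_apply hx ht j

end ViroTerms

section CriticalSystem

variable {n : ℕ} (a : Fin (n + 2) → Fin n → ℝ) (h c : Fin (n + 2) → ℝ)

noncomputable def criticalSystem (z : (Fin n → ℝ) × ℝ) : Fin (n + 1) → ℝ :=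
  expMat n (n + 2) a *ᵥ viroTerms a h c z

variable {a h c}

theorem init_expMatH_mulVec (v : Fin (n + 2) → ℝ) :
    Fin.init (expMatH n a h *ᵥ v) = expMat n (n + 2) a *ᵥ v := by
  ext i
  simp [Fin.init, mulVec, dotProduct, expMatH]

theorem snoc_cons_vecMul_expMatH (σ : ℝ) (u : Fin n → ℝ) (τ : ℝ) (j : Fin (n + 2)) :
    (Fin.snoc (Fin.cons σ u : Fin (n + 1) → ℝ) τ ᵥ* expMatH n a h) j =
      σ + ∑ r, a j r * u r + h j * τ := by
  simp only [vecMul, dotProduct]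
  rw [Fin.sum_univ_castSucc]
  simp only [Fin.snoc_castSucc, Fin.snoc_last, expMatH, of_apply, Fin.lastCases_castSucc,
    Fin.lastCases_last]
  rw [Fin.sum_univ_succ]
  simp [expMat, mul_comm]

theorem fderiv_criticalSystem_apply {z : (Fin n → ℝ) × ℝ} (hx : ∀ r, 0 < z.1 r) (ht : 0 < z.2)
    (p : (Fin n → ℝ) × ℝ) :
    fderiv ℝ (criticalSystem a h c) z p = expMat n (n + 2) a *ᵥ fun j =>
      viroTerms a h c z j * (∑ r, a j r * (p.1 r / z.1 r) + h j * (p.2 / z.2)) := by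
  have hA := (LinearMap.toContinuousLinearMap (expMat n (n + 2) a).mulVecLin).hasFDerivAt
    (x := viroTerms a h c z)
  have hF : HasFDerivAt (criticalSystem a h c) _ z := hA.comp z (hasFDerivAt_viroTerms hx ht)
  rw [hF.fderiv]
  ext j
  simp only [ContinuousLinearMap.comp_apply, LinearMap.coe_toContinuousLinearMap',
    mulVecLin_apply]
  congr 1 with i
  simp only [ContinuousLinearMap.pi_apply, _root_.smul_apply, _root_.add_apply, _root_.sum_apply,
    ContinuousLinearMap.comp_apply, ContinuousLinearMap.proj_apply,
    ContinuousLinearMap.coe_fst', ContinuousLinearMap.coe_snd', smul_eq_mul, mul_div_assoc',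
    div_mul_eq_mul_div]

theorem exists_eq_smul_of_expMat_mulVec_eq_zero (hM : IsUnit (expMatH n a h))
    {lam : Fin (n + 2) → ℝ} (hlam : lam ≠ 0) (hker : expMat n (n + 2) a *ᵥ lam = 0)
    {v : Fin (n + 2) → ℝ} (hv : expMat n (n + 2) a *ᵥ v = 0) : ∃ s : ℝ, v = s • lam :=
  exists_eq_smul_of_init_mulVec_eq_zero (mulVec_injective_iff_isUnit.mpr hM) hlam
    (by rwa [init_expMatH_mulVec]) (by rwa [init_expMatH_mulVec])

theorem eq_zero_of_forall_sum_mul_add_mul_eq_const (hM : IsUnit (expMatH n a h))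
    {u : Fin n → ℝ} {τ κ : ℝ} (hconst : ∀ j, ∑ r, a j r * u r + h j * τ = κ) :
    u = 0 ∧ τ = 0 := by
  have hvecMul : Fin.snoc (Fin.cons (-κ) u : Fin (n + 1) → ℝ) τ ᵥ* expMatH n a h =
      Fin.snoc (Fin.cons 0 0 : Fin (n + 1) → ℝ) 0 ᵥ* expMatH n a h := by
    ext j
    rw [snoc_cons_vecMul_expMatH, snoc_cons_vecMul_expMatH]
    simp only [Pi.zero_apply, mul_zero, Finset.sum_const_zero, add_zero]
    linarith [hconst j]
  obtain ⟨hcons, hτ⟩ := Fin.snoc_injective2 (vecMul_injective_iff_isUnit.mpr hM hvecMul)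
  exact ⟨(Fin.cons_injective2 hcons).2, hτ⟩

theorem signCompatible_of_criticalSystem_eq_zero (hM : IsUnit (expMatH n a h))
    (hc : ∀ j, c j ≠ 0) {lam : Fin (n + 2) → ℝ} (hlam : lam ≠ 0)
    (hker : expMat n (n + 2) a *ᵥ lam = 0) {z : (Fin n → ℝ) × ℝ} (hx : ∀ r, 0 < z.1 r)
    (ht : 0 < z.2) (hz : criticalSystem a h c z = 0) :
    (∀ j, 0 < c j * lam j) ∨ (∀ j, c j * lam j < 0) := by
  obtain ⟨s, hs⟩ := exists_eq_smul_of_expMat_mulVec_eq_zero hM hlam hker hz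
  have hsign : ∀ j, 0 < s * (c j * lam j) := fun j => by
    simpa [hs, mul_left_comm] using mul_viroTerms_pos (a := a) (h := h) hc hx ht j
  rcases lt_trichotomy s 0 with hs0 | rfl | hs0
  · exact .inr fun j => neg_of_mul_pos_right (hsign j) hs0.le
  · simpa using hsign 0
  · exact .inl fun j => pos_of_mul_pos_right (hsign j) hs0.le

theorem mul_exp_snoc_cons_log_vecMul_expMatH {z : (Fin n → ℝ) × ℝ} (hx : ∀ r, 0 < z.1 r)
    (ht : 0 < z.2) (σ : ℝ) (j : Fin (n + 2)) :
    c j * Real.exp ((Fin.snoc (Fin.cons σ fun r => Real.log (z.1 r) : Fin (n + 1) → ℝ)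
      (Real.log z.2) ᵥ* expMatH n a h) j) = Real.exp σ * viroTerms a h c z j := by
  rw [snoc_cons_vecMul_expMatH, viroTerms_eq_exp hx ht, add_assoc, Real.exp_add]
  ring

theorem criticalSystem_eq_zero_iff (hM : IsUnit (expMatH n a h)) {lam : Fin (n + 2) → ℝ}
    (hpos : ∀ j, 0 < c j * lam j) (hker : expMat n (n + 2) a *ᵥ lam = 0)
    {z : (Fin n → ℝ) × ℝ} (hx : ∀ r, 0 < z.1 r) (ht : 0 < z.2) :
    criticalSystem a h c z = 0 ↔ ∃ σ : ℝ,
      Fin.snoc (Fin.cons σ fun r => Real.log (z.1 r) : Fin (n + 1) → ℝ) (Real.log z.2) ᵥ*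
        expMatH n a h = fun j => Real.log (lam j / c j) := by
  have hc : ∀ j, c j ≠ 0 := fun j => left_ne_zero_of_mul (hpos j).ne'
  have hquot : ∀ j, 0 < lam j / c j := fun j => by
    rcases pos_and_pos_or_neg_and_neg_of_mul_pos (hpos j) with ⟨hcj, hlj⟩ | ⟨hcj, hlj⟩
    · exact div_pos hlj hcj
    · exact div_pos_of_neg_of_neg hlj hcj
  constructor
  · intro hz
    have hlam : lam ≠ 0 := fun h0 => by simpa [h0] using hpos 0
    obtain ⟨s, hs⟩ := exists_eq_smul_of_expMat_mulVec_eq_zero hM hlam hker hz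
    have hs0 : 0 < s := pos_of_mul_pos_left
      (by simpa [hs, mul_left_comm] using mul_viroTerms_pos (a := a) (h := h) hc hx ht 0)
      (hpos 0).le
    refine ⟨-Real.log s, funext fun j => ?_⟩
    rw [← Real.log_exp ((_ ᵥ* expMatH n a h) j)]
    congr 1
    rw [eq_div_iff (hc j), mul_comm, mul_exp_snoc_cons_log_vecMul_expMatH hx ht, hs,
      Real.exp_neg, Real.exp_log hs0, Pi.smul_apply, smul_eq_mul, inv_mul_cancel_left₀ hs0.ne']
  · rintro ⟨σ, hσ⟩
    have hv : viroTerms a h c z = Real.exp (-σ) • lam := funext fun j => by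
      have := mul_exp_snoc_cons_log_vecMul_expMatH (a := a) (h := h) (c := c) hx ht σ j
      rw [hσ, Real.exp_log (hquot j), mul_div_cancel₀ _ (hc j)] at this
      rw [Pi.smul_apply, smul_eq_mul, this, Real.exp_neg,
        inv_mul_cancel_left₀ (Real.exp_pos σ).ne']
    rw [criticalSystem, hv, mulVec_smul, hker, smul_zero]

theorem existsUnique_criticalSystem_eq_zero (hM : IsUnit (expMatH n a h))
    {lam : Fin (n + 2) → ℝ} (hpos : ∀ j, 0 < c j * lam j)
    (hker : expMat n (n + 2) a *ᵥ lam = 0) :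
    ∃! z : (Fin n → ℝ) × ℝ, ((∀ r, 0 < z.1 r) ∧ 0 < z.2) ∧ criticalSystem a h c z = 0 := by
  obtain ⟨w, hw⟩ := vecMul_surjective_iff_isUnit.mpr hM fun j => Real.log (lam j / c j)
  rw [← Fin.snoc_init_self w, ← Fin.cons_self_tail (Fin.init w)] at hw
  refine ⟨(fun r => Real.exp (Fin.tail (Fin.init w) r), Real.exp (w (Fin.last _))),
    ⟨⟨fun r => Real.exp_pos _, Real.exp_pos _⟩, ?_⟩, ?_⟩
  · rw [criticalSystem_eq_zero_iff hM hpos hker (fun r => Real.exp_pos _) (Real.exp_pos _)]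
    exact ⟨_, by simpa only [Real.log_exp] using hw⟩
  · rintro z ⟨⟨hx, ht⟩, hz⟩
    obtain ⟨σ, hσ⟩ := (criticalSystem_eq_zero_iff hM hpos hker hx ht).mp hz
    obtain ⟨hcons, hlast⟩ :=
      Fin.snoc_injective2 (vecMul_injective_iff_isUnit.mpr hM (hσ.trans hw.symm))
    obtain ⟨-, htail⟩ := Fin.cons_injective2 hcons
    ext r
    · simp [← htail, Real.exp_log (hx r)]
    · simp [← hlast, Real.exp_log ht]

theorem bijective_fderiv_criticalSystem (hM : IsUnit (expMatH n a h)) (hc : ∀ j, c j ≠ 0)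
    {lam : Fin (n + 2) → ℝ} (hlam : lam ≠ 0) (hker : expMat n (n + 2) a *ᵥ lam = 0)
    {z : (Fin n → ℝ) × ℝ} (hx : ∀ r, 0 < z.1 r) (ht : 0 < z.2)
    (hz : criticalSystem a h c z = 0) :
    Function.Bijective (fderiv ℝ (criticalSystem a h c) z) := by
  have hinj : Function.Injective (fderiv ℝ (criticalSystem a h c) z) := by
    refine (injective_iff_map_eq_zero _).mpr fun p hp => ?_
    rw [fderiv_criticalSystem_apply hx ht] at hp
    obtain ⟨κ, hκ⟩ := exists_eq_smul_of_expMat_mulVec_eq_zero hM hlam hker hp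
    obtain ⟨s, hs⟩ := exists_eq_smul_of_expMat_mulVec_eq_zero hM hlam hker hz
    have hconst : ∀ j, ∑ r, a j r * (p.1 r / z.1 r) + h j * (p.2 / z.2) = κ / s := fun j => by
      have hvj := (mul_viroTerms_pos (a := a) (h := h) hc hx ht j).ne'
      have hκj := congrFun hκ j
      simp only [hs, Pi.smul_apply, smul_eq_mul] at hκj hvj
      rw [eq_div_iff (left_ne_zero_of_mul (right_ne_zero_of_mul hvj))]
      exact mul_right_cancel₀ (right_ne_zero_of_mul (right_ne_zero_of_mul hvj))
        (by rw [← hκj]; ring)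
    obtain ⟨hu, hτ⟩ := eq_zero_of_forall_sum_mul_add_mul_eq_const hM hconst
    ext r
    · simpa [(hx r).ne'] using congrFun hu r
    · simpa [ht.ne'] using hτ
  exact ⟨hinj, (LinearMap.injective_iff_surjective_of_finrank_eq_finrank (by simp)).mp hinj⟩

end CriticalSystem

theorem codim_one_critical_system_general (n : ℕ)
    (a : Fin (n + 2) → Fin n → ℝ)
    (lam : Fin (n + 2) → ℝ) (hlam : lam ≠ 0)
    (hker : (expMat n (n + 2) a).mulVec lam = 0)
    (h : Fin (n + 2) → ℝ) (hrankH : (expMatH n a h).rank = n + 2)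
    (c : Fin (n + 2) → ℝ) (hc : ∀ i, c i ≠ 0) :
    let G : (Fin n → ℝ) × ℝ → Fin (n + 1) → ℝ := fun z i =>
      ∑ j, expMat n (n + 2) a i j * (c j * z.2 ^ h j * ∏ r, z.1 r ^ a j r)
    let Pos : (Fin n → ℝ) × ℝ → Prop := fun z => (∀ r, 0 < z.1 r) ∧ 0 < z.2
    (((∀ i, 0 < c i * lam i) ∨ (∀ i, c i * lam i < 0)) →
      (∃! z : (Fin n → ℝ) × ℝ, Pos z ∧ G z = 0) ∧
      ∀ z : (Fin n → ℝ) × ℝ, Pos z ∧ G z = 0 →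
        Function.Bijective (fderiv ℝ G z)) ∧
    ((¬ ((∀ i, 0 < c i * lam i) ∨ (∀ i, c i * lam i < 0))) →
      ¬ ∃ z : (Fin n → ℝ) × ℝ, Pos z ∧ G z = 0) := by
  intro G Pos
  have hG : G = criticalSystem a h c := rfl
  rw [hG]
  have hM : IsUnit (expMatH n a h) := isUnit_of_rank_eq_card (by simpa using hrankH)
  refine ⟨fun hcompat => ⟨?_, ?_⟩, ?_⟩
  · rcases hcompat with hpos | hneg
    · exact existsUnique_criticalSystem_eq_zero hM hpos hker
    · exact existsUnique_criticalSystem_eq_zero hM (lam := -lam) (by simpa using hneg)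
        (by rw [mulVec_neg, hker, neg_zero])
  · rintro z ⟨⟨hx, ht⟩, hz⟩
    exact bijective_fderiv_criticalSystem hM hc hlam hker hx ht hz
  · rintro hincompat ⟨z, ⟨hx, ht⟩, hz⟩
    exact hincompat (signCompatible_of_criticalSystem_eq_zero hM hc hlam hker hx ht hz)

/-- Codimension-1 critical system: with `rank A = n+1`, `rank A^h = n+2`, the critical system
of the Viro polynomial has exactly one positive solution `(x,t)`, which is simple, when the
coefficients are sign compatible; otherwise no positive solution. -/
theorem codim_one_critical_system (n : ℕ)
    (a : Fin (n + 2) → Fin n → ℝ)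
    (hrank : (expMat n (n + 2) a).rank = n + 1)
    (lam : Fin (n + 2) → ℝ) (hlam : lam ≠ 0)
    (hker : (expMat n (n + 2) a).mulVec lam = 0)
    (h : Fin (n + 2) → ℝ) (hrankH : (expMatH n a h).rank = n + 2)
    (c : Fin (n + 2) → ℝ) (hc : ∀ i, c i ≠ 0) :
    let G : (Fin n → ℝ) × ℝ → Fin (n + 1) → ℝ := fun z i =>
      ∑ j, expMat n (n + 2) a i j * (c j * z.2 ^ h j * ∏ r, z.1 r ^ a j r)
    let Pos : (Fin n → ℝ) × ℝ → Prop := fun z => (∀ r, 0 < z.1 r) ∧ 0 < z.2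
    (((∀ i, 0 < c i * lam i) ∨ (∀ i, c i * lam i < 0)) →
      (∃! z : (Fin n → ℝ) × ℝ, Pos z ∧ G z = 0) ∧
      ∀ z : (Fin n → ℝ) × ℝ, Pos z ∧ G z = 0 →
        Function.Bijective (fderiv ℝ G z)) ∧
    ((¬ ((∀ i, 0 < c i * lam i) ∨ (∀ i, c i * lam i < 0))) →
      ¬ ∃ z : (Fin n → ℝ) × ℝ, Pos z ∧ G z = 0) :=
  codim_one_critical_system_general n a lam hlam hker h hrankH c hc
end
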